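/- Let Λ be an even lattice, let S be a primitive hyperbolic sublattice of Λ on which the form is nondegenerate, and suppose the orthogonal complement R of S in Λ is negative definite. For x ∈ Λ, let x_S denote the orthogonal projection of x to S⊗ℚ. Let w ∈ Λ be a vector with (w_S)² > 0. Then the set Δ_w := {r ∈ Λ : r² = −2, ⟨w,r⟩ = 1, (r_S)² < 0} is finite. -/

import Mathlib

namespace K3Aut

variable {n : ℕ}

/-- The real symmetric bilinear pairing on `L ⊗ ℝ = ℝⁿ` determined by an
integral Gram matrix `B`. -/
def pair (B : Matrix (Fin n) (Fin n) ℤ) (x y : Fin n → ℝ) : ℝ :=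
  ∑ i, ∑ j, x i * (B i j : ℝ) * y j

/-- `x` is a point of the lattice `L` (integer coordinates). -/
def isLat (x : Fin n → ℝ) : Prop := ∀ i, ∃ k : ℤ, x i = (k : ℝ)

/-- `x` has rational coordinates (a point of `L ⊗ ℚ`). -/
def isRatPt (x : Fin n → ℝ) : Prop := ∀ i, ∃ q : ℚ, x i = (q : ℝ)

/-- `x` is a point of the dual lattice `L∨ ⊆ L ⊗ ℚ`. -/
def isDual (B : Matrix (Fin n) (Fin n) ℤ) (x : Fin n → ℝ) : Prop :=
  isRatPt x ∧ ∀ y : Fin n → ℝ, isLat y → ∃ k : ℤ, pair B x y = (k : ℝ)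

/-- The Gram matrix `B` is symmetric, nondegenerate and even. -/
def IsEvenLat (B : Matrix (Fin n) (Fin n) ℤ) : Prop :=
  B.IsSymm ∧ B.det ≠ 0 ∧ ∀ i, Even (B i i)

/-- The form restricted to the subspace `W` is nondegenerate with exactly one
positive direction, i.e. of signature `(1, dim W - 1)`. -/
def IsHypOn (B : Matrix (Fin n) (Fin n) ℤ) (W : Submodule ℝ (Fin n → ℝ)) : Prop :=
  (∃ x ∈ W, 0 < pair B x x) ∧
  (∀ x ∈ W, ∀ y ∈ W, 0 < pair B x x → 0 < pair B y y →
      pair B x x * pair B y y ≤ pair B x y ^ 2) ∧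
  (∀ x ∈ W, (∀ y ∈ W, pair B x y = 0) → x = 0)

/-- The lattice is hyperbolic: rank `n > 1` and signature `(1, n-1)`. -/
def IsHyperbolic (B : Matrix (Fin n) (Fin n) ℤ) : Prop :=
  1 < n ∧ IsHypOn B ⊤

/-- `P` is a positive cone: a connected component of the set of positive-norm
vectors of `L ⊗ ℝ`. -/
def IsPosCone (B : Matrix (Fin n) (Fin n) ℤ) (P : Set (Fin n → ℝ)) : Prop :=
  ∃ x, 0 < pair B x x ∧ P = connectedComponentIn {y | 0 < pair B y y} x

/-- The hyperplane `(v)⊥` of `P`. -/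
def perp (B : Matrix (Fin n) (Fin n) ℤ) (P : Set (Fin n → ℝ)) (v : Fin n → ℝ) :
    Set (Fin n → ℝ) := {x ∈ P | pair B x v = 0}

/-- `V ⊆ {v ∈ L∨ : v² < 0}`. -/
def DualNeg (B : Matrix (Fin n) (Fin n) ℤ) (V : Set (Fin n → ℝ)) : Prop :=
  ∀ v ∈ V, isDual B v ∧ pair B v v < 0

/-- Condition [V1]: the norms of the vectors of `V` are bounded. -/
def CondV1 (B : Matrix (Fin n) (Fin n) ℤ) (V : Set (Fin n → ℝ)) : Prop :=
  ∃ c : ℝ, 0 < c ∧ ∀ v ∈ V, -pair B v v < c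

/-- The cone `Σ_L(Δ)`. -/
def SigmaCone (B : Matrix (Fin n) (Fin n) ℤ) (Δ : Set (Fin n → ℝ)) :
    Set (Fin n → ℝ) :=
  {x | ∀ v ∈ Δ, 0 ≤ pair B x v}

/-- `D` is a `V*`-chamber: the closure in `P` of a connected component of the
complement in `P` of the hyperplanes `(v)⊥`, `v ∈ V`. -/
def IsChamber (B : Matrix (Fin n) (Fin n) ℤ) (P V D : Set (Fin n → ℝ)) : Prop :=
  ∃ x ∈ P, (∀ v ∈ V, pair B x v ≠ 0) ∧
    D = closure (connectedComponentIn {y ∈ P | ∀ v ∈ V, pair B y v ≠ 0} x) ∩ P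

/-- `Δ` is a defining set of the chamber `D`. -/
def IsDefSet (B : Matrix (Fin n) (Fin n) ℤ) (P Δ D : Set (Fin n → ℝ)) : Prop :=
  (∀ v ∈ Δ, isDual B v ∧ pair B v v < 0) ∧ D = SigmaCone B Δ ∩ P

/-- Condition [V3]: every `V*`-chamber has a finite defining set. -/
def CondV3 (B : Matrix (Fin n) (Fin n) ℤ) (P V : Set (Fin n → ℝ)) : Prop :=
  ∀ D, IsChamber B P V D → ∃ Δ : Set (Fin n → ℝ), Δ.Finite ∧ IsDefSet B P Δ D

/-- Condition [V4]: every boundary point of a `V*`-chamber is rational, i.e.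
every nonzero norm-zero vector of the closure of a chamber is a positive real
multiple of a rational vector. -/
def CondV4 (B : Matrix (Fin n) (Fin n) ℤ) (P V : Set (Fin n → ℝ)) : Prop :=
  ∀ D, IsChamber B P V D → ∀ x ∈ closure D, x ≠ 0 → pair B x x = 0 →
    ∃ t : ℝ, 0 < t ∧ ∃ y, isRatPt y ∧ x = t • y

/-- The action of `GL_n(ℤ)` on `L ⊗ ℝ`. -/
def act (g : (Matrix (Fin n) (Fin n) ℤ)ˣ) (x : Fin n → ℝ) : Fin n → ℝ :=
  ((g : Matrix (Fin n) (Fin n) ℤ).map ((↑) : ℤ → ℝ)).mulVec x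

/-- `g` is an isometry of `L` preserving the positive cone `P`,
i.e. an element of `O⁺(L)`. -/
def InOPlus (B : Matrix (Fin n) (Fin n) ℤ) (P : Set (Fin n → ℝ))
    (g : (Matrix (Fin n) (Fin n) ℤ)ˣ) : Prop :=
  (g : Matrix (Fin n) (Fin n) ℤ).transpose * B * (g : Matrix (Fin n) (Fin n) ℤ) = B ∧
    act g '' P = P

/-- Condition [V2]: `V` is invariant under the action of `G`. -/
def CondV2 (G : Subgroup ((Matrix (Fin n) (Fin n) ℤ)ˣ)) (V : Set (Fin n → ℝ)) : Prop :=
  ∀ g ∈ G, ∀ v ∈ V, act g v ∈ V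

/-- `(v)⊥` is a wall of the chamber `D`: it is disjoint from the interior of `D`
and `(v)⊥ ∩ D` contains a nonempty open subset of `(v)⊥`. -/
def IsWall (B : Matrix (Fin n) (Fin n) ℤ) (P : Set (Fin n → ℝ)) (v : Fin n → ℝ)
    (D : Set (Fin n → ℝ)) : Prop :=
  pair B v v < 0 ∧ perp B P v ∩ interior D = ∅ ∧
  ∃ W : Set (Fin n → ℝ), IsOpen W ∧ (W ∩ perp B P v).Nonempty ∧ W ∩ perp B P v ⊆ D

/-- `D'` is the chamber adjacent to `D` across the wall `(v)⊥`. -/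
def IsAdjacent (B : Matrix (Fin n) (Fin n) ℤ) (P V : Set (Fin n → ℝ))
    (D : Set (Fin n → ℝ)) (v : Fin n → ℝ) (D' : Set (Fin n → ℝ)) : Prop :=
  IsChamber B P V D' ∧ D' ≠ D ∧
  ∃ W : Set (Fin n → ℝ), IsOpen W ∧ (W ∩ perp B P v).Nonempty ∧
    W ∩ perp B P v ⊆ D ∩ D'

/-- `S` is (the set of real points of) a primitive sublattice of `L`. -/
def IsPrimSub (S : Submodule ℤ (Fin n → ℝ)) : Prop :=
  (∀ x ∈ S, isLat x) ∧
  ∀ x : Fin n → ℝ, isLat x → ∀ k : ℤ, k ≠ 0 → (k : ℝ) • x ∈ S → x ∈ S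

/-- `xS` is the orthogonal projection of `x` to `S ⊗ ℚ`. -/
def IsProjS (B : Matrix (Fin n) (Fin n) ℤ) (S : Submodule ℤ (Fin n → ℝ))
    (xS x : Fin n → ℝ) : Prop :=
  xS ∈ Submodule.span ℚ (S : Set (Fin n → ℝ)) ∧ ∀ s ∈ S, pair B (x - xS) s = 0

/-- The orthogonal complement `R = S⊥ ∩ L` of `S` in `L`. -/
def orthCompl (B : Matrix (Fin n) (Fin n) ℤ) (S : Submodule ℤ (Fin n → ℝ)) :
    Set (Fin n → ℝ) :=
  {x | isLat x ∧ ∀ s ∈ S, pair B x s = 0}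

/-- `P` is a positive cone of the subspace `W`. -/
def IsPosConeIn (B : Matrix (Fin n) (Fin n) ℤ) (W : Set (Fin n → ℝ))
    (P : Set (Fin n → ℝ)) : Prop :=
  ∃ x ∈ W, 0 < pair B x x ∧ P = connectedComponentIn {y ∈ W | 0 < pair B y y} x

end K3Aut

/-!
Let `c = w_S² > 0` and consider `m(x) = 2⟨w_S, x⟩² - c x²`, the majorant of the form attached
to `w_S`. It is positive definite: on `S ⊗ ℝ` because `S` is hyperbolic, so that `w_S⊥` is
negative definite there, and on `R ⊗ ℝ` because `R` is negative definite. As `m` has rational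
coefficients it suffices to check positivity at rational points, which split rationally along
`S ⊗ ℚ ⊕ R ⊗ ℚ`. For `r ∈ Δ_w` one has `⟨w_S, r⟩ = 1 - ⟨w_R, r_R⟩` with `-2 < r_R² ≤ 0`, so
`m(r)` is bounded and `Δ_w` is a set of lattice points in a ball.
-/

open Matrix

theorem denseRange_ratCast_pi (ι : Type*) :
    DenseRange fun (q : ι → ℚ) (i : ι) => (q i : ℝ) :=
  DenseRange.piMap fun _ => Rat.denseRange_cast

/-- The form is semidefinite by density of the rational points; a real null vector lies in the
kernel of `A.map (↑)`, so `A` is singular and has a rational null vector. -/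
theorem Matrix.dotProduct_mulVec_map_ratCast_pos {ι : Type*} [Fintype ι] [DecidableEq ι]
    {A : Matrix ι ι ℚ} (hA : A.IsSymm) (hpos : ∀ q : ι → ℚ, q ≠ 0 → 0 < q ⬝ᵥ A *ᵥ q)
    {x : ι → ℝ} (hx : x ≠ 0) : 0 < x ⬝ᵥ A.map (↑) *ᵥ x := by
  set A' : Matrix ι ι ℝ := A.map (↑)
  have hcast : ∀ q : ι → ℚ, (fun i => (q i : ℝ)) ⬝ᵥ A' *ᵥ (fun i => (q i : ℝ)) =
      ((q ⬝ᵥ A *ᵥ q : ℚ) : ℝ) := by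
    intro q
    simp [A', dotProduct, mulVec, Matrix.map_apply]
  have hnonneg : ∀ y : ι → ℝ, 0 ≤ y ⬝ᵥ A' *ᵥ y := by
    intro y
    refine (denseRange_ratCast_pi ι).induction_on y
      (isClosed_le continuous_const (by fun_prop)) fun q => ?_
    rcases eq_or_ne q 0 with rfl | hq
    · simp
    · rw [hcast]; exact_mod_cast (hpos q hq).le
  have hA' : A'.PosSemidef := by
    refine .of_dotProduct_mulVec_nonneg ?_ fun y => by simpa using hnonneg y
    simpa [IsHermitian, A', conjTranspose_eq_transpose_of_trivial] using (hA.map _).eq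
  refine (hnonneg x).lt_of_ne fun h => ?_
  have hker : A' *ᵥ x = 0 := (hA'.dotProduct_mulVec_zero_iff x).mp (by simpa using h.symm)
  have hdet : A.det = 0 := by
    have : A'.det = 0 := exists_mulVec_eq_zero_iff.mp ⟨x, hx, hker⟩
    rw [show A' = (Rat.castHom ℝ).mapMatrix A from rfl, ← RingHom.map_det] at this
    simpa using this
  obtain ⟨q, hq, hAq⟩ := exists_mulVec_eq_zero_iff.mpr hdet
  simpa [hAq] using hpos q hq

theorem exists_pos_mul_norm_sq_le {E : Type*} [NormedAddCommGroup E] [NormedSpace ℝ E]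
    [FiniteDimensional ℝ E] {f : E → ℝ} (hf : Continuous f)
    (hsmul : ∀ (t : ℝ) (x : E), f (t • x) = t ^ 2 * f x) (hpos : ∀ x ≠ 0, 0 < f x) :
    ∃ κ > 0, ∀ x, κ * ‖x‖ ^ 2 ≤ f x := by
  have hf0 : f 0 = 0 := by simpa using hsmul 0 0
  rcases subsingleton_or_nontrivial E with hE | hE
  · exact ⟨1, one_pos, fun x => by simp [Subsingleton.elim x 0, hf0]⟩
  obtain ⟨z, hz, hmin⟩ := (isCompact_sphere (0 : E) 1).exists_isMinOn
    (NormedSpace.sphere_nonempty.mpr zero_le_one) hf.continuousOn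
  have hz0 : z ≠ 0 := ne_zero_of_mem_unit_sphere ⟨z, hz⟩
  refine ⟨f z, hpos z hz0, fun x => ?_⟩
  rcases eq_or_ne x 0 with rfl | hx
  · simp [hf0]
  have hnx : ‖x‖ ≠ 0 := norm_ne_zero_iff.mpr hx
  have hxs : ‖x‖⁻¹ • x ∈ Metric.sphere (0 : E) 1 := by
    simp [norm_smul, hnx]
  calc f z * ‖x‖ ^ 2 ≤ ‖x‖ ^ 2 * f (‖x‖⁻¹ • x) := by
        rw [mul_comm]; exact mul_le_mul_of_nonneg_left (hmin hxs) (sq_nonneg _)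
    _ = f x := by rw [← hsmul, smul_smul, mul_inv_cancel₀ hnx, one_smul]

namespace K3Aut

section Pair

variable {n : ℕ} (B : Matrix (Fin n) (Fin n) ℤ)

theorem pair_eq_dotProduct (x y : Fin n → ℝ) : pair B x y = x ⬝ᵥ B.map (↑) *ᵥ y := by
  simp [pair, dotProduct, mulVec, Finset.mul_sum, mul_assoc]

@[simp] theorem pair_add_left (x y z : Fin n → ℝ) :
    pair B (x + y) z = pair B x z + pair B y z := by
  simp [pair_eq_dotProduct, add_dotProduct]

@[simp] theorem pair_add_right (x y z : Fin n → ℝ) :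
    pair B x (y + z) = pair B x y + pair B x z := by
  simp [pair_eq_dotProduct, mulVec_add, dotProduct_add]

@[simp] theorem pair_sub_left (x y z : Fin n → ℝ) :
    pair B (x - y) z = pair B x z - pair B y z := by
  simp [pair_eq_dotProduct, sub_dotProduct]

@[simp] theorem pair_sub_right (x y z : Fin n → ℝ) :
    pair B x (y - z) = pair B x y - pair B x z := by
  simp [pair_eq_dotProduct, mulVec_sub, dotProduct_sub]

@[simp] theorem pair_smul_left (t : ℝ) (x y : Fin n → ℝ) :
    pair B (t • x) y = t * pair B x y := by
  simp [pair_eq_dotProduct]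

@[simp] theorem pair_smul_right (t : ℝ) (x y : Fin n → ℝ) :
    pair B x (t • y) = t * pair B x y := by
  simp [pair_eq_dotProduct, mulVec_smul]

@[simp] theorem pair_zero_left (x : Fin n → ℝ) : pair B 0 x = 0 := by
  simp [pair_eq_dotProduct]

@[simp] theorem pair_zero_right (x : Fin n → ℝ) : pair B x 0 = 0 := by
  simp [pair_eq_dotProduct]

theorem pair_comm (hB : B.IsSymm) (x y : Fin n → ℝ) : pair B x y = pair B y x := by
  rw [pair_eq_dotProduct, pair_eq_dotProduct, dotProduct_mulVec, dotProduct_comm,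
    ← mulVec_transpose, ← transpose_map, hB.eq]

theorem pair_add_self (hB : B.IsSymm) (x y : Fin n → ℝ) :
    pair B (x + y) (x + y) = pair B x x + 2 * pair B x y + pair B y y := by
  simp only [pair_add_left, pair_add_right, pair_comm B hB y x]
  ring

@[fun_prop] theorem Continuous.pair {X : Type*} [TopologicalSpace X] {f g : X → Fin n → ℝ}
    (hf : Continuous f) (hg : Continuous g) : Continuous fun t => pair B (f t) (g t) := by
  unfold K3Aut.pair; fun_prop

theorem pair_eq_zero_of_mem_span {v : Fin n → ℝ} {s : Set (Fin n → ℝ)}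
    (h : ∀ x ∈ s, pair B v x = 0) {t : Fin n → ℝ} (ht : t ∈ Submodule.span ℝ s) :
    pair B v t = 0 := by
  induction ht using Submodule.span_induction with
  | mem y hy => exact h y hy
  | zero => exact pair_zero_right B v
  | add y z _ _ hy hz => simp [hy, hz]
  | smul t y _ hy => simp [hy]

theorem pair_eq_zero_of_mem_span_rat {v : Fin n → ℝ} {s : Set (Fin n → ℝ)}
    (h : ∀ x ∈ s, pair B v x = 0) {t : Fin n → ℝ} (ht : t ∈ Submodule.span ℚ s) :
    pair B v t = 0 :=
  pair_eq_zero_of_mem_span B h (Submodule.span_subset_span ℚ ℝ s ht)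

end Pair

section Rational

noncomputable def ratCastVec (n : ℕ) : (Fin n → ℚ) →ₗ[ℚ] (Fin n → ℝ) :=
  (Algebra.linearMap ℚ ℝ).compLeft (Fin n)

variable {n : ℕ}

@[simp] theorem ratCastVec_apply (q : Fin n → ℚ) (i : Fin n) : ratCastVec n q i = q i := rfl

theorem ratCastVec_injective : Function.Injective (ratCastVec n) :=
  fun _ _ h => funext fun i => by simpa using congrFun h i

theorem isRatPt_iff_mem_range {x : Fin n → ℝ} :
    isRatPt x ↔ x ∈ LinearMap.range (ratCastVec n) := by
  refine ⟨fun hx => ?_, ?_⟩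
  · choose q hq using hx
    exact ⟨q, funext fun i => (hq i).symm⟩
  · rintro ⟨q, rfl⟩ i
    exact ⟨q i, rfl⟩

theorem isRatPt_of_isLat {x : Fin n → ℝ} (hx : isLat x) : isRatPt x := fun i => by
  obtain ⟨k, hk⟩ := hx i
  exact ⟨k, by simp [hk]⟩

theorem isRatPt_of_mem_span_rat {s : Set (Fin n → ℝ)} (hs : ∀ x ∈ s, isRatPt x)
    {x : Fin n → ℝ} (hx : x ∈ Submodule.span ℚ s) : isRatPt x :=
  isRatPt_iff_mem_range.mpr <|
    Submodule.span_le.mpr (fun y hy => isRatPt_iff_mem_range.mp (hs y hy)) hx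

theorem exists_ne_zero_isLat_smul {x : Fin n → ℝ} (hx : isRatPt x) :
    ∃ N : ℤ, N ≠ 0 ∧ isLat ((N : ℝ) • x) := by
  choose q hq using hx
  obtain ⟨⟨N, hN⟩, hNq⟩ := IsLocalization.exist_integer_multiples_of_finite (nonZeroDivisors ℤ) q
  refine ⟨N, nonZeroDivisors.ne_zero hN, fun i => ?_⟩
  obtain ⟨k, hk⟩ := hNq i
  refine ⟨k, ?_⟩
  have hk' : (k : ℚ) = N * q i := by simpa using hk
  simp only [Pi.smul_apply, hq i, smul_eq_mul]
  exact_mod_cast hk'.symm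

theorem finite_setOf_isLat_norm_le (R : ℝ) :
    {x : Fin n → ℝ | isLat x ∧ ‖x‖ ≤ R}.Finite := by
  set M := ⌈R⌉
  refine ((Set.finite_Icc (fun _ : Fin n => -M) fun _ => M).image
    fun k i => (k i : ℝ)).subset ?_
  rintro x ⟨hx, hxR⟩
  choose k hk using hx
  have hkM : ∀ i, |k i| ≤ M := fun i => by
    have : |(k i : ℝ)| ≤ M := by
      rw [← hk i, ← Real.norm_eq_abs]
      exact (norm_le_pi_norm x i).trans (hxR.trans (Int.le_ceil R))
    exact_mod_cast this
  exact ⟨k, ⟨fun i => (abs_le.mp (hkM i)).1, fun i => (abs_le.mp (hkM i)).2⟩,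
    funext fun i => (hk i).symm⟩

end Rational

section Orthogonal

def NegDefOrth {n : ℕ} (B : Matrix (Fin n) (Fin n) ℤ) (S : Submodule ℤ (Fin n → ℝ)) : Prop :=
  ∀ x : Fin n → ℝ, isLat x → (∀ s ∈ S, pair B x s = 0) → x ≠ 0 → pair B x x < 0

variable {n : ℕ} (B : Matrix (Fin n) (Fin n) ℤ) {S : Submodule ℤ (Fin n → ℝ)}

theorem pair_self_neg_of_isRatPt (hR : NegDefOrth B S) {v : Fin n → ℝ} (hv : isRatPt v)
    (hvS : ∀ s ∈ S, pair B v s = 0) (hv0 : v ≠ 0) : pair B v v < 0 := by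
  obtain ⟨N, hN, hNv⟩ := exists_ne_zero_isLat_smul hv
  have hN' : (N : ℝ) ≠ 0 := by exact_mod_cast hN
  have h := hR _ hNv (fun s hs => by simp [hvS s hs]) (smul_ne_zero hN' hv0)
  simp only [pair_smul_left, pair_smul_right, ← mul_assoc] at h
  exact neg_of_mul_neg_right h (mul_self_nonneg _)

theorem pair_self_nonpos_of_isRatPt (hR : NegDefOrth B S) {v : Fin n → ℝ} (hv : isRatPt v)
    (hvS : ∀ s ∈ S, pair B v s = 0) : pair B v v ≤ 0 := by
  rcases eq_or_ne v 0 with rfl | hv0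
  · simp
  · exact (pair_self_neg_of_isRatPt B hR hv hvS hv0).le

theorem two_mul_abs_pair_le (hB : B.IsSymm) (hR : NegDefOrth B S) {p q : Fin n → ℝ}
    (hp : isRatPt p) (hq : isRatPt q) (hpS : ∀ s ∈ S, pair B p s = 0)
    (hqS : ∀ s ∈ S, pair B q s = 0) : 2 * |pair B p q| ≤ -pair B p p - pair B q q := by
  rw [isRatPt_iff_mem_range] at hp hq
  have hadd := pair_self_nonpos_of_isRatPt B hR
    (isRatPt_iff_mem_range.mpr (add_mem hp hq)) fun s hs => by simp [hpS s hs, hqS s hs]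
  have hsub := pair_self_nonpos_of_isRatPt B hR
    (isRatPt_iff_mem_range.mpr (sub_mem hp hq)) fun s hs => by simp [hpS s hs, hqS s hs]
  simp only [pair_add_left, pair_add_right, pair_sub_left, pair_sub_right,
    pair_comm B hB q p] at hadd hsub
  rcases abs_cases (pair B p q) with ⟨h, -⟩ | ⟨h, -⟩ <;> rw [h] <;> linarith

/-- Work in `ℚⁿ`, where `S ⊗ ℚ` is nondegenerate and hence complemented by its orthogonal. -/
theorem exists_isProjS (hB : B.IsSymm) (hSlat : ∀ x ∈ S, isLat x)
    (hnd : ∀ x ∈ Submodule.span ℝ (S : Set (Fin n → ℝ)),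
      (∀ y ∈ Submodule.span ℝ (S : Set (Fin n → ℝ)), pair B x y = 0) → x = 0)
    {x : Fin n → ℝ} (hx : isRatPt x) : ∃ xS, IsProjS B S xS x := by
  set β : LinearMap.BilinForm ℚ (Fin n → ℚ) := Matrix.toBilin' (B.map (↑))
  have hβ : ∀ p q, (β p q : ℝ) = pair B (ratCastVec n p) (ratCastVec n q) := by
    intro p q
    simp [β, Matrix.toBilin'_apply, pair]
  set W : Submodule ℚ (Fin n → ℚ) :=
    (Submodule.span ℚ (S : Set (Fin n → ℝ))).comap (ratCastVec n)
  have hSW : ∀ s ∈ S, ∃ q ∈ W, ratCastVec n q = s := fun s hs => by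
    obtain ⟨q, rfl⟩ := isRatPt_iff_mem_range.mp (isRatPt_of_isLat (hSlat s hs))
    exact ⟨q, Submodule.subset_span hs, rfl⟩
  have hrefl : β.IsRefl := fun p q h => by
    have : (β q p : ℝ) = 0 := by rw [hβ, pair_comm B hB, ← hβ, h, Rat.cast_zero]
    exact_mod_cast this
  have hndW : (β.restrict W).Nondegenerate := by
    refine (hrefl.domRestrict W).nondegenerate_iff_separatingLeft.mpr fun ⟨u, hu⟩ hu0 => ?_
    have hspan := Submodule.span_subset_span ℚ ℝ (S : Set (Fin n → ℝ)) hu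
    have hu0' : ratCastVec n u = 0 := hnd _ hspan fun y hy => by
      refine pair_eq_zero_of_mem_span B (fun s hs => ?_) hy
      obtain ⟨q, hqW, rfl⟩ := hSW s hs
      rw [← hβ]
      exact_mod_cast hu0 ⟨q, hqW⟩
    exact Subtype.ext (ratCastVec_injective (by simpa using hu0'))
  obtain ⟨q, rfl⟩ := isRatPt_iff_mem_range.mp hx
  obtain ⟨a, haW, b, hb, rfl⟩ := Submodule.mem_sup.mp
    ((LinearMap.BilinForm.isCompl_orthogonal_of_restrict_nondegenerate hrefl hndW).sup_eq_top
      ▸ Submodule.mem_top : q ∈ W ⊔ β.orthogonal W)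
  refine ⟨ratCastVec n a, haW, fun s hs => ?_⟩
  obtain ⟨q', hq'W, rfl⟩ := hSW s hs
  rw [map_add, add_sub_cancel_left, pair_comm B hB, ← hβ]
  exact_mod_cast hb q' hq'W

theorem IsProjS.isRatPt_sub (hSlat : ∀ x ∈ S, isLat x) {x xS : Fin n → ℝ}
    (h : IsProjS B S xS x) (hx : isRatPt x) : isRatPt (x - xS) :=
  isRatPt_iff_mem_range.mpr <| sub_mem (isRatPt_iff_mem_range.mp hx) <|
    isRatPt_iff_mem_range.mp <|
      isRatPt_of_mem_span_rat (fun s hs => isRatPt_of_isLat (hSlat s hs)) h.1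

end Orthogonal

section Majorant

variable {n : ℕ} (B : Matrix (Fin n) (Fin n) ℤ)

/-- Siegel's majorant `2⟨a,x⟩²/a² - x²` of the form attached to a positive vector `a`,
multiplied by `a²`. -/
def majorant (a x : Fin n → ℝ) : ℝ := 2 * pair B a x ^ 2 - pair B a a * pair B x x

theorem majorant_smul (a : Fin n → ℝ) (t : ℝ) (x : Fin n → ℝ) :
    majorant B a (t • x) = t ^ 2 * majorant B a x := by
  simp only [majorant, pair_smul_left, pair_smul_right]
  ring

theorem continuous_majorant (a : Fin n → ℝ) : Continuous (majorant B a) := by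
  unfold majorant; fun_prop

variable {W : Submodule ℝ (Fin n → ℝ)} {a : Fin n → ℝ}

theorem pair_self_neg_of_pair_eq_zero (hB : B.IsSymm) (hW : IsHypOn B W) (ha : a ∈ W)
    (ha0 : 0 < pair B a a) {u : Fin n → ℝ} (hu : u ∈ W) (hau : pair B a u = 0)
    (hu0 : u ≠ 0) : pair B u u < 0 := by
  obtain ⟨-, hCS, hnd⟩ := hW
  rcases lt_trichotomy (pair B u u) 0 with hneg | hzero | hpos
  · exact hneg
  · exfalso
    obtain ⟨v, hv, hd⟩ : ∃ v ∈ W, pair B u v ≠ 0 := by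
      by_contra! h
      exact hu0 (hnd u hu h)
    -- moving `v` along the isotropic `u` changes its norm at will but not its pairing with
    -- `a`; the norm `K` contradicts the reverse Cauchy–Schwarz inequality
    set K := pair B a v ^ 2 / pair B a a + 1
    set x := v + ((K - pair B v v) / (2 * pair B u v)) • u
    have hx2 : pair B x x = K := by
      simp only [x, pair_add_self B hB, pair_smul_left, pair_smul_right, hzero,
        pair_comm B hB v u]
      field_simp
      ring
    have hax : pair B a x = pair B a v := by simp [x, hau]
    have hK : 0 < K := by positivity
    have := hCS a ha x (W.add_mem hv (W.smul_mem _ hu)) ha0 (hx2 ▸ hK)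
    rw [hx2, hax, mul_add, mul_div_cancel₀ _ ha0.ne'] at this
    linarith
  · have := hCS a ha u hu ha0 hpos
    rw [hau] at this
    nlinarith

theorem majorant_pos_of_mem (hB : B.IsSymm) (hW : IsHypOn B W) (ha : a ∈ W)
    (ha0 : 0 < pair B a a) {u : Fin n → ℝ} (hu : u ∈ W) (hu0 : u ≠ 0) :
    0 < majorant B a u := by
  set s := pair B a u / pair B a a
  set u' := u - s • a
  have hau' : pair B a u' = 0 := by
    simp only [u', s, pair_sub_right, pair_smul_right, div_mul_cancel₀ _ ha0.ne', sub_self]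
  have hmaj : majorant B a u = (s * pair B a a) ^ 2 - pair B a a * pair B u' u' := by
    rw [show u = u' + s • a by simp [u']]
    simp only [majorant, pair_add_self B hB, pair_add_right, pair_smul_left, pair_smul_right,
      hau', pair_comm B hB u' a]
    ring
  rw [hmaj]
  rcases eq_or_ne u' 0 with hu'0 | hu'0
  · have hs : s ≠ 0 := fun hs => hu0 (by simpa [u', hs] using hu'0)
    rw [hu'0, pair_zero_left, mul_zero, sub_zero]
    positivity
  · have := pair_self_neg_of_pair_eq_zero B hB hW ha ha0
      (W.sub_mem hu (W.smul_mem s ha)) hau' hu'0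
    nlinarith [sq_nonneg (s * pair B a a)]

end Majorant

section MajorantDefinite

variable {n : ℕ} (B : Matrix (Fin n) (Fin n) ℤ) {S : Submodule ℤ (Fin n → ℝ)}
  {a : Fin n → ℝ}

theorem majorant_pos_of_isRatPt (hB : B.IsSymm) (hSlat : ∀ x ∈ S, isLat x)
    (hShyp : IsHypOn B (Submodule.span ℝ (S : Set (Fin n → ℝ)))) (hR : NegDefOrth B S)
    (ha : a ∈ Submodule.span ℚ (S : Set (Fin n → ℝ))) (ha0 : 0 < pair B a a)
    {x : Fin n → ℝ} (hx : isRatPt x) (hx0 : x ≠ 0) : 0 < majorant B a x := by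
  obtain ⟨u, hu, hxu⟩ := exists_isProjS B hB hSlat hShyp.2.2 hx
  have hv := IsProjS.isRatPt_sub B hSlat ⟨hu, hxu⟩ hx
  set v := x - u
  have hav : pair B a v = 0 := by rw [pair_comm B hB]; exact pair_eq_zero_of_mem_span_rat B hxu ha
  have huv : pair B u v = 0 := by rw [pair_comm B hB]; exact pair_eq_zero_of_mem_span_rat B hxu hu
  have hmaj : majorant B a x = majorant B a u - pair B a a * pair B v v := by
    rw [show x = u + v by simp [v]]
    simp only [majorant, pair_add_self B hB, pair_add_right, hav, huv]
    ring
  rw [hmaj]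
  rcases eq_or_ne u 0 with rfl | hu0
  · have hv0 := pair_self_neg_of_isRatPt B hR hv hxu (by simpa [v] using hx0)
    simp only [majorant, pair_zero_right]
    nlinarith
  · have h1 := majorant_pos_of_mem B hB hShyp (Submodule.span_subset_span ℚ ℝ _ ha) ha0
      (Submodule.span_subset_span ℚ ℝ _ hu) hu0
    have h2 := pair_self_nonpos_of_isRatPt B hR hv hxu
    nlinarith

theorem exists_ratMatrix_majorant_eq (hB : B.IsSymm) (aq : Fin n → ℚ) :
    ∃ A : Matrix (Fin n) (Fin n) ℚ, A.IsSymm ∧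
      ∀ x, majorant B (ratCastVec n aq) x = x ⬝ᵥ A.map (↑) *ᵥ x := by
  set Bq : Matrix (Fin n) (Fin n) ℚ := B.map (↑)
  set α := aq ᵥ* Bq
  set c := aq ⬝ᵥ Bq *ᵥ aq
  refine ⟨(2 : ℚ) • vecMulVec α α - c • Bq, ?_, fun x => ?_⟩
  · exact (IsSymm.smul (by simp [IsSymm, transpose_vecMulVec]) 2).sub ((hB.map _).smul _)
  set a := ratCastVec n aq
  set B' : Matrix (Fin n) (Fin n) ℝ := B.map (↑)
  have hmap : ((2 : ℚ) • vecMulVec α α - c • Bq).map (↑) =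
      (2 : ℝ) • vecMulVec (a ᵥ* B') (a ᵥ* B') - pair B a a • B' := by
    ext i j
    simp [α, Bq, B', c, a, vecMulVec_apply, vecMul, dotProduct, mulVec, pair_eq_dotProduct]
  rw [hmap, sub_mulVec, smul_mulVec, smul_mulVec, vecMulVec_mulVec, dotProduct_sub,
    dotProduct_smul, dotProduct_smul]
  simp only [majorant, pair_eq_dotProduct, dotProduct_mulVec, dotProduct_comm x,
    MulOpposite.smul_eq_mul_unop, MulOpposite.unop_op, smul_eq_mul, smul_dotProduct]
  ring

theorem exists_pos_mul_norm_sq_le_majorant (hB : B.IsSymm) (hSlat : ∀ x ∈ S, isLat x)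
    (hShyp : IsHypOn B (Submodule.span ℝ (S : Set (Fin n → ℝ)))) (hR : NegDefOrth B S)
    (ha : a ∈ Submodule.span ℚ (S : Set (Fin n → ℝ))) (ha0 : 0 < pair B a a) :
    ∃ κ > 0, ∀ x, κ * ‖x‖ ^ 2 ≤ majorant B a x := by
  have haQ := isRatPt_of_mem_span_rat (fun s hs => isRatPt_of_isLat (hSlat s hs)) ha
  obtain ⟨aq, rfl⟩ := isRatPt_iff_mem_range.mp haQ
  obtain ⟨A, hA, hmaj⟩ := exists_ratMatrix_majorant_eq B hB aq
  refine exists_pos_mul_norm_sq_le (continuous_majorant B _) (majorant_smul B _) fun x hx => ?_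
  rw [hmaj]
  refine dotProduct_mulVec_map_ratCast_pos hA (fun q hq => ?_) hx
  have := majorant_pos_of_isRatPt B hB hSlat hShyp hR ha ha0
    (isRatPt_iff_mem_range.mpr ⟨q, rfl⟩) ((map_ne_zero_iff _ ratCastVec_injective).mpr hq)
  rw [hmaj] at this
  have hcast : ratCastVec n q ⬝ᵥ A.map (↑) *ᵥ ratCastVec n q = ((q ⬝ᵥ A *ᵥ q : ℚ) : ℝ) := by
    simp [dotProduct, mulVec]
  exact_mod_cast hcast ▸ this

/-- Here `⟨w_S, r⟩ = 1 - ⟨w_R, r_R⟩`, and `r_R² > -2` bounds `⟨w_R, r_R⟩` since `R` is negative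
definite. -/
theorem majorant_le_of_pair_eq (hB : B.IsSymm) (hSlat : ∀ x ∈ S, isLat x)
    (hR : NegDefOrth B S) {w wS r rS : Fin n → ℝ} (hw : isRatPt w) (hwS : IsProjS B S wS w)
    (hr : isRatPt r) (hrS : IsProjS B S rS r) (hr2 : pair B r r = -2) (hwr : pair B w r = 1)
    (hrS2 : pair B rS rS < 0) :
    majorant B wS r ≤ (4 - pair B (w - wS) (w - wS)) ^ 2 / 2 + 2 * pair B wS wS := by
  have hwRQ := hwS.isRatPt_sub B hSlat hw
  have hrRQ := hrS.isRatPt_sub B hSlat hr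
  obtain ⟨-, hwR⟩ := hwS
  obtain ⟨hrSQ, hrR⟩ := hrS
  set wR := w - wS
  set rR := r - rS
  have h1 : pair B wR rS = 0 := pair_eq_zero_of_mem_span_rat B hwR hrSQ
  have h2 : pair B rR rS = 0 := pair_eq_zero_of_mem_span_rat B hrR hrSQ
  have hr2' : pair B rS rS + pair B rR rR = -2 := by
    rw [← hr2, show r = rS + rR by simp [rR], pair_add_self B hB, pair_comm B hB rS rR, h2]
    ring
  have hwr' : pair B wS r = 1 - pair B wR rR := by
    rw [← hwr, show w = wS + wR by simp [wR], show r = rS + rR by simp [rR]]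
    simp only [pair_add_left, pair_add_right, h1]
    ring
  have hy := two_mul_abs_pair_le B hB hR hwRQ hrRQ hwR hrR
  rw [majorant, hwr', hr2]
  nlinarith [abs_nonneg (pair B wR rR), neg_abs_le (pair B wR rR), le_abs_self (pair B wR rR)]

end MajorantDefinite

/-- **finiteness of `Δ_w`.**  Let `Λ` be an even lattice, `S` a
primitive hyperbolic sublattice on which the form is nondegenerate, with
negative-definite orthogonal complement `R`.  Let `w ∈ Λ` with `(w_S)² > 0`.
Then the set `Δ_w = {r ∈ Λ : r² = -2, ⟨w,r⟩ = 1, (r_S)² < 0}` is finite. -/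
theorem statement_11 {n : ℕ} (B : Matrix (Fin n) (Fin n) ℤ)
    (hB : IsEvenLat B)
    (S : Submodule ℤ (Fin n → ℝ)) (hSprim : IsPrimSub S)
    (hShyp : IsHypOn B (Submodule.span ℝ (S : Set (Fin n → ℝ))))
    (hRneg : ∀ x : Fin n → ℝ, isLat x → (∀ s ∈ S, pair B x s = 0) → x ≠ 0 →
      pair B x x < 0)
    (w : Fin n → ℝ) (hw : isLat w)
    (hwS : ∃ wS, IsProjS B S wS w ∧ 0 < pair B wS wS) :
    {r : Fin n → ℝ | isLat r ∧ pair B r r = -2 ∧ pair B w r = 1 ∧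
      ∃ rS, IsProjS B S rS r ∧ pair B rS rS < 0}.Finite := by
  obtain ⟨wS, hwS, hc⟩ := hwS
  obtain ⟨κ, hκ, hcoer⟩ :=
    exists_pos_mul_norm_sq_le_majorant B hB.1 hSprim.1 hShyp hRneg hwS.1 hc
  set C := (4 - pair B (w - wS) (w - wS)) ^ 2 / 2 + 2 * pair B wS wS
  refine (finite_setOf_isLat_norm_le √(C / κ)).subset ?_
  rintro r ⟨hr, hr2, hwr, rS, hrS, hrS2⟩
  have hmaj : majorant B wS r ≤ C := majorant_le_of_pair_eq B hB.1 hSprim.1 hRneg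
    (isRatPt_of_isLat hw) hwS (isRatPt_of_isLat hr) hrS hr2 hwr hrS2
  refine ⟨hr, Real.le_sqrt_of_sq_le ?_⟩
  rw [le_div_iff₀ hκ]
  linarith [hcoer r]

end K3Aut
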